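/- With 𝔤 = 𝔥 ⊕ 𝔥 and B as above (α+β > β ≥ α > 0), define 𝔤^{ss} = span{Y₂, Z₂}, 𝔤^{c} = span{X₁, X₂}, 𝔤^{uu} = span{Z₁, Y₁}. Then 𝔤^{cs} = 𝔤^{ss} ⊕ 𝔤^{c}, 𝔤^{cu} = 𝔤^{c} ⊕ 𝔤^{uu}, and 𝔤^{c} are all Lie subalgebras of 𝔤, and each is B-invariant. -/

import Mathlib

/-! Each of the three subspaces is spanned by eigenvectors of `B`, hence `B`-invariant. The
brackets of the basis vectors vanish except for `[Xᵢ, Yᵢ] = Zᵢ`, so a span of basis vectors is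
a subalgebra as soon as it contains `Zᵢ` whenever it contains both `Xᵢ` and `Yᵢ`; none of the
three subspaces contains a `Yᵢ` without the matching `Zᵢ`. -/

namespace Stmt11

/-- `𝔤 = 𝔥 ⊕ 𝔥` realized inside the product ring of `3 × 3` real matrices with the
commutator bracket; only nontrivial basis brackets are `[X₁,Y₁] = Z₁`, `[X₂,Y₂] = Z₂`. -/
abbrev amb := Matrix (Fin 3) (Fin 3) ℝ × Matrix (Fin 3) (Fin 3) ℝ

noncomputable def X1 : amb := (Matrix.single 0 1 1, 0)
noncomputable def Y1 : amb := (Matrix.single 1 2 1, 0)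
noncomputable def Z1 : amb := (Matrix.single 0 2 1, 0)
noncomputable def X2 : amb := (0, Matrix.single 0 1 1)
noncomputable def Y2 : amb := (0, Matrix.single 1 2 1)
noncomputable def Z2 : amb := (0, Matrix.single 0 2 1)

noncomputable def gss : Submodule ℝ amb := Submodule.span ℝ ({Y2, Z2} : Set amb)
noncomputable def gc : Submodule ℝ amb := Submodule.span ℝ ({X1, X2} : Set amb)
noncomputable def guu : Submodule ℝ amb := Submodule.span ℝ ({Z1, Y1} : Set amb)
noncomputable def gcs : Submodule ℝ amb := gss ⊔ gc
noncomputable def gcu : Submodule ℝ amb := gc ⊔ guu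


open Submodule

theorem lie_mem_span_of_forall_lie_mem {R L : Type*} [CommRing R] [LieRing L] [LieAlgebra R L]
    {s : Set L} (h : ∀ a ∈ s, ∀ b ∈ s, ⁅a, b⁆ ∈ span R s) :
    ∀ v ∈ span R s, ∀ w ∈ span R s, ⁅v, w⁆ ∈ span R s := by
  intro v hv w hw
  have hvw := apply_mem_map₂ (LieModule.toEnd R L L : L →ₗ[R] Module.End R L) hv hw
  rw [map₂_span_span] at hvw
  refine span_le.mpr ?_ hvw
  rintro _ ⟨a, ha, b, hb, rfl⟩
  exact h a ha b hb

theorem map_mem_span_of_forall_eq_smul {R M : Type*} [CommSemiring R] [AddCommMonoid M]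
    [Module R M] (f : M →ₗ[R] M) {s : Set M} (h : ∀ a ∈ s, ∃ c : R, f a = c • a) :
    ∀ v ∈ span R s, f v ∈ span R s := by
  intro v hv
  refine (map_span_le f s _).mpr (fun a ha => ?_) (mem_map_of_mem hv)
  obtain ⟨c, hc⟩ := h a ha
  exact hc ▸ smul_mem _ c (subset_span ha)

theorem lie_X1_Y1 : ⁅X1, Y1⁆ = Z1 := by
  simp [X1, Y1, Z1, Ring.lie_def, Matrix.single_mul_single_same, Matrix.single_mul_single_of_ne]

theorem lie_X2_Y2 : ⁅X2, Y2⁆ = Z2 := by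
  simp [X2, Y2, Z2, Ring.lie_def, Matrix.single_mul_single_same, Matrix.single_mul_single_of_ne]

theorem lie_mem_span_of_subset_basis {s : Set amb} (hs : s ⊆ {X1, Y1, Z1, X2, Y2, Z2})
    (h₁ : X1 ∈ s → Y1 ∈ s → Z1 ∈ s) (h₂ : X2 ∈ s → Y2 ∈ s → Z2 ∈ s) :
    ∀ v ∈ span ℝ s, ∀ w ∈ span ℝ s, ⁅v, w⁆ ∈ span ℝ s := by
  let : LieRing amb := LieRing.ofAssociativeRing
  refine lie_mem_span_of_forall_lie_mem fun a ha b hb => ?_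
  have hY1X1 : ⁅Y1, X1⁆ = -Z1 := by rw [← lie_skew, lie_X1_Y1]
  have hY2X2 : ⁅Y2, X2⁆ = -Z2 := by rw [← lie_skew, lie_X2_Y2]
  rcases hs ha with rfl | rfl | rfl | rfl | rfl | rfl <;>
  rcases hs hb with rfl | rfl | rfl | rfl | rfl | rfl <;>
  first
  | (rw [lie_X1_Y1]; exact subset_span (h₁ ha hb))
  | (rw [hY1X1]; exact neg_mem (subset_span (h₁ hb ha)))
  | (rw [lie_X2_Y2]; exact subset_span (h₂ ha hb))
  | (rw [hY2X2]; exact neg_mem (subset_span (h₂ hb ha)))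
  | (rw [show ⁅_, _⁆ = (0 : amb) by
        simp [X1, Y1, Z1, X2, Y2, Z2, Ring.lie_def, Matrix.single_mul_single_of_ne]]
     exact zero_mem _)

theorem gcs_eq_span : gcs = span ℝ ({Y2, Z2} ∪ {X1, X2}) := by
  rw [gcs, gss, gc, span_union]

theorem gcu_eq_span : gcu = span ℝ ({X1, X2} ∪ {Z1, Y1}) := by
  rw [gcu, gc, guu, span_union]

theorem lie_mem_gcs : ∀ v ∈ gcs, ∀ w ∈ gcs, ⁅v, w⁆ ∈ gcs := by
  rw [gcs_eq_span]
  refine lie_mem_span_of_subset_basis (by simp [Set.insert_subset_iff])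
    (fun _ hY1 => absurd hY1 ?_) (fun _ _ => by simp)
  simp [X1, Y1, X2, Y2, Z2, Prod.ext_iff, ← Matrix.ext_iff, Matrix.single_apply,
    Fin.forall_fin_succ]

theorem lie_mem_gcu : ∀ v ∈ gcu, ∀ w ∈ gcu, ⁅v, w⁆ ∈ gcu := by
  rw [gcu_eq_span]
  refine lie_mem_span_of_subset_basis (by simp [Set.insert_subset_iff]) (fun _ _ => by simp)
    (fun _ hY2 => absurd hY2 ?_)
  simp [X1, Y1, Z1, X2, Y2, Prod.ext_iff, ← Matrix.ext_iff, Matrix.single_apply,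
    Fin.forall_fin_succ]

theorem lie_mem_gc : ∀ v ∈ gc, ∀ w ∈ gc, ⁅v, w⁆ ∈ gc := by
  rw [gc]
  refine lie_mem_span_of_subset_basis (by simp [Set.insert_subset_iff])
    (fun _ hY1 => absurd hY1 ?_) (fun _ hY2 => absurd hY2 ?_) <;>
  simp [X1, Y1, X2, Y2, Prod.ext_iff, ← Matrix.ext_iff, Matrix.single_apply, Fin.forall_fin_succ]

theorem stmt_11_general (lam α β : ℝ)
    (B : amb →ₗ[ℝ] amb)
    (hBZ1 : B Z1 = lam ^ (α + β) • Z1)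
    (hBY1 : B Y1 = lam ^ β • Y1)
    (hBX1 : B X1 = lam ^ α • X1)
    (hBX2 : B X2 = lam ^ (-α) • X2)
    (hBY2 : B Y2 = lam ^ (-β) • Y2)
    (hBZ2 : B Z2 = lam ^ (-α - β) • Z2) :
    (∀ v ∈ gcs, ∀ w ∈ gcs, ⁅v, w⁆ ∈ gcs) ∧ (∀ v ∈ gcs, B v ∈ gcs) ∧
    (∀ v ∈ gcu, ∀ w ∈ gcu, ⁅v, w⁆ ∈ gcu) ∧ (∀ v ∈ gcu, B v ∈ gcu) ∧
    (∀ v ∈ gc, ∀ w ∈ gc, ⁅v, w⁆ ∈ gc) ∧ (∀ v ∈ gc, B v ∈ gc) := by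
  refine ⟨lie_mem_gcs, ?_, lie_mem_gcu, ?_, lie_mem_gc, ?_⟩
  · rw [gcs_eq_span]
    refine map_mem_span_of_forall_eq_smul B ?_
    rintro a ((rfl | rfl) | (rfl | rfl))
    exacts [⟨_, hBY2⟩, ⟨_, hBZ2⟩, ⟨_, hBX1⟩, ⟨_, hBX2⟩]
  · rw [gcu_eq_span]
    refine map_mem_span_of_forall_eq_smul B ?_
    rintro a ((rfl | rfl) | (rfl | rfl))
    exacts [⟨_, hBX1⟩, ⟨_, hBX2⟩, ⟨_, hBZ1⟩, ⟨_, hBY1⟩]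
  · refine map_mem_span_of_forall_eq_smul B ?_
    rintro a (rfl | rfl)
    exacts [⟨_, hBX1⟩, ⟨_, hBX2⟩]

/-- With `𝔤^{ss} = span{Y₂,Z₂}`, `𝔤^c = span{X₁,X₂}`,
`𝔤^{uu} = span{Z₁,Y₁}`, the subspaces `𝔤^{cs} = 𝔤^{ss} ⊕ 𝔤^c`, `𝔤^{cu} = 𝔤^c ⊕ 𝔤^{uu}`
and `𝔤^c` are Lie subalgebras of `𝔤`, each invariant under the diagonal hyperbolic
automorphism `B`. -/
theorem stmt_11 (lam α β : ℝ) (hlam : 1 < lam) (hα : 0 < α) (hαβ : α ≤ β)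
    (B : amb →ₗ[ℝ] amb)
    (hBZ1 : B Z1 = lam ^ (α + β) • Z1)
    (hBY1 : B Y1 = lam ^ β • Y1)
    (hBX1 : B X1 = lam ^ α • X1)
    (hBX2 : B X2 = lam ^ (-α) • X2)
    (hBY2 : B Y2 = lam ^ (-β) • Y2)
    (hBZ2 : B Z2 = lam ^ (-α - β) • Z2) :
    (∀ v ∈ gcs, ∀ w ∈ gcs, ⁅v, w⁆ ∈ gcs) ∧ (∀ v ∈ gcs, B v ∈ gcs) ∧
    (∀ v ∈ gcu, ∀ w ∈ gcu, ⁅v, w⁆ ∈ gcu) ∧ (∀ v ∈ gcu, B v ∈ gcu) ∧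
    (∀ v ∈ gc, ∀ w ∈ gc, ⁅v, w⁆ ∈ gc) ∧ (∀ v ∈ gc, B v ∈ gc) :=
  stmt_11_general lam α β B hBZ1 hBY1 hBX1 hBX2 hBY2 hBZ2

end Stmt11
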